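/- In the semigroup $T := (\mathbb{N}\times\mathbb{N}) \cup \{0\}$ with $0 + x = x + 0 = 0$ and $(m_1,n_1)+(m_2,n_2) := (m_1, n_1+n_2)$ if $m_1 = m_2$ and $0$ otherwise, the sequence $a_n := (n, 1)$ is injective and $FS_{\ge 2}(a_n) = \{0\}$; hence proper IP sets in $T$ are not partition regular. -/

import Mathlib

/-- The ordered sum `a_{i_1} + ⋯ + a_{i_m}` over a finite index set
`F = {i_1 < ⋯ < i_m}` (junk value `a 0` if `F = ∅`). -/
def ordsum {S : Type*} [AddSemigroup S] (a : ℕ → S) (F : Finset ℕ) : S :=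
  match F.sort (· ≤ ·) with
  | [] => a 0
  | i :: l => l.foldl (fun s j => s + a j) (a i)

/-- `F < G`: every element of `F` is smaller than every element of `G`. -/
def FinsetLT (F G : Finset ℕ) : Prop := ∀ i ∈ F, ∀ j ∈ G, i < j

/-- `FS(a_1, a_2, …)`: the set of all finite ordered sums of the sequence `a`. -/
def FSset {S : Type*} [AddSemigroup S] (a : ℕ → S) : Set S :=
  {s | ∃ F : Finset ℕ, F.Nonempty ∧ ordsum a F = s}

/-- `FS(a_n, a_{n+1}, …)`: finite ordered sums with all indices `≥ n`. -/
def FStail {S : Type*} [AddSemigroup S] (a : ℕ → S) (n : ℕ) : Set S :=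
  {s | ∃ F : Finset ℕ, F.Nonempty ∧ (∀ i ∈ F, n ≤ i) ∧ ordsum a F = s}

/-- A sequence is proper if `a_{F₁} ≠ a_{F₂}` whenever `F₁ < F₂`. -/
def IsProperSeq {S : Type*} [AddSemigroup S] (a : ℕ → S) : Prop :=
  ∀ F G : Finset ℕ, F.Nonempty → G.Nonempty → FinsetLT F G →
    ordsum a F ≠ ordsum a G

/-- `b` is a sumsequence of `a`: `b_k = a_{F_k}` for finite index sets `F₁ < F₂ < ⋯`. -/
def IsSumseq {S : Type*} [AddSemigroup S] (a b : ℕ → S) : Prop :=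
  ∃ F : ℕ → Finset ℕ, (∀ k, (F k).Nonempty) ∧
    (∀ k, FinsetLT (F k) (F (k + 1))) ∧ (∀ k, b k = ordsum a (F k))


/-- A proper IP set: contains `FS(b)` for an injective sequence `b`. -/
def IsProperIP {S : Type*} [AddSemigroup S] (A : Set S) : Prop :=
  ∃ b : ℕ → S, Function.Injective b ∧ FSset b ⊆ A

/-- Partition regularity of the family of proper IP sets of `S`. -/
def ProperIPPartReg (S : Type*) [AddSemigroup S] : Prop :=
  ∀ A : Set S, IsProperIP A → ∀ (k : ℕ) (c : S → Fin k),
    ∃ i : Fin k, IsProperIP {s ∈ A | c s = i}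

/-- `FS(b_0, …, b_{n-1})`: ordered sums over nonempty `F ⊆ {0, …, n-1}`. -/
def FSfin {S : Type*} [AddSemigroup S] (a : ℕ → S) (n : ℕ) : Set S :=
  {s | ∃ F : Finset ℕ, F.Nonempty ∧ F ⊆ Finset.range n ∧ ordsum a F = s}

/-- `FS_{≥2}(a)`: ordered sums with at least two summands. -/
def FS2set {S : Type*} [AddSemigroup S] (a : ℕ → S) : Set S :=
  {s | ∃ F : Finset ℕ, 2 ≤ F.card ∧ ordsum a F = s}

/-- The semigroup `(ℕ × ℕ) ∪ {0}`: `0` is absorbing, `(m,n₁)+(m,n₂) = (m,n₁+n₂)`,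
and sums of pairs with distinct first coordinates equal `0` (here `0 = none`). -/
def T : Type := Option (ℕ × ℕ)

/-- The element `(m, n)` of `T`. -/
def Tmk (m n : ℕ) : T := some (m, n)

/-- The absorbing element `0` of `T`. -/
def Tzero : T := none

def Tadd (x y : T) : T :=
  match x, y with
  | some (m1, n1), some (m2, n2) => if m1 = m2 then some (m1, n1 + n2) else none
  | _, _ => none

theorem Tadd_assoc (x y z : T) : Tadd (Tadd x y) z = Tadd x (Tadd y z) := by
  have key : ∀ a b c d : ℕ, Tadd (some (a, b)) (some (c, d)) =
      if a = c then some (a, b + d) else none := fun _ _ _ _ => rfl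
  have hn2 : ∀ x : T, Tadd x none = none := fun x => by rcases x with _ | ⟨_, _⟩ <;> rfl
  rcases x with _ | ⟨m1, n1⟩
  · rfl
  rcases y with _ | ⟨m2, n2⟩
  · rfl
  rcases z with _ | ⟨m3, n3⟩
  · exact (hn2 _).trans ((congrArg _ (hn2 _)).trans (hn2 _)).symm
  by_cases h1 : m1 = m2 <;> by_cases h2 : m2 = m3
  · subst h1 h2
    rw [key m1 n1 m1 n2, if_pos rfl, key m1 (n1 + n2) m1 n3, if_pos rfl, key m1 n2 m1 n3,
      if_pos rfl, key m1 n1 m1 (n2 + n3), if_pos rfl, Nat.add_assoc]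
  · rw [key m1 n1 m2 n2, if_pos h1, key m1 (n1 + n2) m3 n3, if_neg (by omega),
      key m2 n2 m3 n3, if_neg h2]
    exact (hn2 _).symm
  · rw [key m1 n1 m2 n2, if_neg h1, key m2 n2 m3 n3, if_pos h2,
      key m1 n1 m2 (n2 + n3), if_neg h1]
    rfl
  · rw [key m1 n1 m2 n2, if_neg h1, key m2 n2 m3 n3, if_neg h2]
    exact ((hn2 _).symm : _)

instance : AddSemigroup T where
  add := Tadd
  add_assoc := Tadd_assoc

/-! The sum of two distinct generators `(m, 1)`, `(n, 1)` is `0`, which is absorbing, so every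
sum with at least two summands is `0` and `FS(a_n) = {0} ∪ {a_n}`. Colour `T` by membership in
`{a_n}`. A proper IP set `FS(b_n)` contains `b_0 ≠ b_1` and `b_0 + b_1`, all of one colour: they
cannot all be `0`, and the sum of two generators is never a generator. -/

section OrderedSums

variable {S : Type*} [AddSemigroup S]

theorem ordsum_singleton (a : ℕ → S) (i : ℕ) : ordsum a {i} = a i := by
  simp [ordsum, Finset.sort_singleton]

theorem ordsum_pair (a : ℕ → S) {i j : ℕ} (hij : i < j) : ordsum a {i, j} = a i + a j := by
  have hsort : ({i, j} : Finset ℕ).sort (· ≤ ·) = [i, j] := by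
    rw [Finset.sort_insert _ (by simpa using hij.le) (by simpa using hij.ne),
      Finset.sort_singleton]
  simp [ordsum, hsort]

theorem List.foldl_add_eq_of_absorbing (a : ℕ → S) {z : S} (hz : ∀ s, z + s = z)
    (l : List ℕ) : l.foldl (fun s j => s + a j) z = z := by
  induction l with
  | nil => rfl
  | cons j l ih => rw [List.foldl_cons, hz, ih]

theorem ordsum_eq_of_two_le_card {a : ℕ → S} {z : S} (hz : ∀ s, z + s = z)
    (ha : ∀ i j, i ≠ j → a i + a j = z) {F : Finset ℕ} (hF : 2 ≤ F.card) :
    ordsum a F = z := by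
  have hlen := Finset.length_sort (· ≤ ·) (s := F)
  have hnd := F.sort_nodup (· ≤ ·)
  unfold ordsum
  rcases hl : F.sort (· ≤ ·) with _ | ⟨i, _ | ⟨j, rest⟩⟩
  all_goals rw [hl] at hlen hnd
  · simp at hlen; omega
  · simp at hlen; omega
  · have hij : i ≠ j := fun h => by simp [h] at hnd
    simp only [List.foldl_cons, ha i j hij]
    exact List.foldl_add_eq_of_absorbing a hz rest

theorem FSset_subset_range_union_FS2set (a : ℕ → S) :
    FSset a ⊆ Set.range a ∪ FS2set a := by
  rintro _ ⟨F, hF, rfl⟩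
  rcases Nat.lt_or_ge F.card 2 with hc | hc
  · obtain ⟨i, rfl⟩ := Finset.card_eq_one.mp (show F.card = 1 by have := hF.card_pos; omega)
    exact Or.inl ⟨i, (ordsum_singleton a i).symm⟩
  · exact Or.inr ⟨F, hc, rfl⟩

theorem IsProperIP.exists_add_mem {A : Set S} (hA : IsProperIP A) :
    ∃ x ∈ A, ∃ y ∈ A, x ≠ y ∧ x + y ∈ A := by
  obtain ⟨b, hb, hbA⟩ := hA
  refine ⟨b 0, hbA ⟨{0}, by simp, ordsum_singleton b 0⟩, b 1,
    hbA ⟨{1}, by simp, ordsum_singleton b 1⟩, hb.ne zero_ne_one,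
    hbA ⟨{0, 1}, by simp, ordsum_pair b zero_lt_one⟩⟩

theorem not_properIPPartReg_of_split {A P : Set S} (hA : IsProperIP A)
    (hP : ∀ x ∈ P, ∀ y ∈ P, x + y ∉ P) (hAP : (A \ P).Subsingleton) :
    ¬ ProperIPPartReg S := by
  classical
  intro hreg
  obtain ⟨i, hi⟩ := hreg A hA 2 (fun s => if s ∈ P then 0 else 1)
  obtain ⟨x, hx, y, hy, hxy, hsum⟩ := hi.exists_add_mem
  have hsame : ∀ s ∈ {s ∈ A | (if s ∈ P then 0 else 1 : Fin 2) = i}, (s ∈ P ↔ x ∈ P) := by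
    rintro s ⟨-, hs⟩
    have hsx := hs.trans hx.2.symm
    by_cases hsP : s ∈ P <;> by_cases hxP : x ∈ P <;> simp [hsP, hxP] at hsx ⊢
  by_cases hxP : x ∈ P
  · exact hP x hxP y ((hsame y hy).2 hxP) ((hsame _ hsum).2 hxP)
  · exact hxy (hAP ⟨hx.1, hxP⟩ ⟨hy.1, mt (hsame y hy).1 hxP⟩)

end OrderedSums

theorem Tzero_add (x : T) : Tzero + x = Tzero := rfl

theorem Tmk_add_Tmk (m n p q : ℕ) :
    Tmk m p + Tmk n q = if m = n then Tmk m (p + q) else Tzero := rfl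

theorem Tmk_one_add_Tmk_one_ne (m n k : ℕ) : Tmk m 1 + Tmk n 1 ≠ Tmk k 1 := by
  rw [Tmk_add_Tmk]
  split_ifs
  · intro h
    cases h
  · exact Option.some_ne_none _ ∘ Eq.symm

theorem FS2set_Tmk_one : FS2set (fun n : ℕ => Tmk n 1) = {Tzero} := by
  have hsum : ∀ i j, i ≠ j → Tmk i 1 + Tmk j 1 = Tzero := fun i j hij => by
    rw [Tmk_add_Tmk, if_neg hij]
  ext s
  constructor
  · rintro ⟨F, hF, rfl⟩
    exact ordsum_eq_of_two_le_card Tzero_add hsum hF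
  · rintro rfl
    exact ⟨{0, 1}, by decide, by rw [ordsum_pair _ zero_lt_one, hsum 0 1 zero_ne_one]⟩

theorem stmt16 :
    Function.Injective (fun n : ℕ => Tmk n 1) ∧
    FS2set (fun n : ℕ => Tmk n 1) = {Tzero} ∧
    ¬ ProperIPPartReg T := by
  set a : ℕ → T := fun n => Tmk n 1
  have ha : Function.Injective a := fun m n h => congrArg Prod.fst (Option.some.inj h)
  refine ⟨ha, FS2set_Tmk_one, not_properIPPartReg_of_split (P := Set.range a)
    ⟨a, ha, subset_rfl⟩ ?_ ?_⟩
  · rintro _ ⟨m, rfl⟩ _ ⟨n, rfl⟩ ⟨k, hk⟩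
    exact Tmk_one_add_Tmk_one_ne m n k hk.symm
  · refine (Set.subsingleton_singleton (a := Tzero)).anti fun s ⟨hs, hsP⟩ => ?_
    rw [← FS2set_Tmk_one]
    exact (FSset_subset_range_union_FS2set a hs).resolve_left hsP
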